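/- arXiv:1205.3280 — 6 statements merged into one kernel-verified Lean document; each statement's English description precedes it below -/
import Mathlib

section
/- Let A₀ and A₁ be n × n Hermitian complex matrices with A₀² = I and A₁² = I (i.e. Hermitian matrices with eigenvalues ±1). Then there exists a finite family of pairwise orthogonal projections {P_i} on ℂⁿ with Σ_i P_i = I, each of rank at most 2, such that every P_i commutes with both A₀ and A₁ (equivalently, A₀ = ⊕_i A₀^i and A₁ = ⊕_i A₁^i where A₀^i, A₁^i act within the range of P_i). -/
/-!
Over `ℂ` the operator `T₀T₁` has an eigenvector `w` in every nonzero subspace invariant under both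
involutions. From `T₀T₁w = μw` one gets `T₁w = μ • T₀w` and `T₁T₀w = μ⁻¹ • w`, so `span {w, T₀w}`
is an invariant block of dimension at most 2. Self-adjointness makes the orthogonal complement of
a block invariant again, so blocks can be split off one at a time; the orthogonal projections onto
the blocks are the required `Pᵢ`.
-/

open Matrix Module Submodule

section Involutions

variable {K M : Type*} [Field K] [AddCommGroup M] [Module K M] {T0 T1 : Module.End K M}

lemma span_pair_mem_invtSubmodule (h0 : Function.Involutive T0) (h1 : Function.Involutive T1)
    {μ : K} (hμ : μ ≠ 0) {w : M} (hw : T0 (T1 w) = μ • w) :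
    span K {w, T0 w} ∈ T0.invtSubmodule ∧ span K {w, T0 w} ∈ T1.invtSubmodule := by
  have hT1w : T1 w = μ • T0 w := by rw [← map_smul, ← hw, h0]
  have hT1T0w : T1 (T0 w) = μ⁻¹ • w := by
    rw [eq_inv_smul_iff₀ hμ, ← map_smul, ← hT1w, h1]
  simp only [Module.End.mem_invtSubmodule, span_le, Set.insert_subset_iff,
    Set.singleton_subset_iff, SetLike.mem_coe, mem_comap, h0 w, hT1w, hT1T0w]
  have hw : w ∈ span K {w, T0 w} := subset_span (by simp)
  have hT0w : T0 w ∈ span K {w, T0 w} := subset_span (by simp)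
  exact ⟨⟨hT0w, hw⟩, smul_mem _ _ hT0w, smul_mem _ _ hw⟩

theorem exists_invtSubmodule_le_finrank_le_two [IsAlgClosed K] [FiniteDimensional K M]
    (h0 : Function.Involutive T0) (h1 : Function.Involutive T1) {V : Submodule K M}
    (hV : V ≠ ⊥) (hV0 : V ∈ T0.invtSubmodule) (hV1 : V ∈ T1.invtSubmodule) :
    ∃ W ≤ V, W ≠ ⊥ ∧ finrank K W ≤ 2 ∧ W ∈ T0.invtSubmodule ∧ W ∈ T1.invtSubmodule := by
  have : Nontrivial V := nontrivial_iff_ne_bot.mpr hV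
  have hV01 : Set.MapsTo (T0 * T1) V V := fun x hx => hV0 (hV1 hx)
  obtain ⟨μ, hμ⟩ := Module.End.exists_eigenvalue ((T0 * T1).restrict hV01)
  obtain ⟨⟨w, hwV⟩, hw⟩ := hμ.exists_hasEigenvector
  have hw0 : w ≠ 0 := fun h => hw.2 (Subtype.ext h)
  have hTw : T0 (T1 w) = μ • w := congrArg Subtype.val hw.apply_eq_smul
  have hμ0 : μ ≠ 0 := by
    rintro rfl
    apply hw0
    rw [← h1 w, ← h0 (T1 w), hTw, zero_smul, map_zero, map_zero]
  refine ⟨span K {w, T0 w}, span_le.mpr ?_, ?_, ?_, span_pair_mem_invtSubmodule h0 h1 hμ0 hTw⟩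
  · exact Set.insert_subset hwV (Set.singleton_subset_iff.mpr (hV0 hwV))
  · exact fun h => hw0 (by simpa [h] using (subset_span (by simp) : w ∈ span K {w, T0 w}))
  · classical
    exact (finrank_span_le_card _).trans (by simpa using Finset.card_le_two)

end Involutions

section Projections

variable {𝕜 E : Type*} [RCLike 𝕜] [NormedAddCommGroup E] [InnerProductSpace 𝕜 E]

lemma Submodule.commute_starProjection_of_mem_invtSubmodule [CompleteSpace E] {K : Submodule 𝕜 E}
    [K.HasOrthogonalProjection] {T : E →L[𝕜] E} (hT : IsSelfAdjoint T)
    (hK : K ∈ Module.End.invtSubmodule (T : E →ₗ[𝕜] E)) : Commute K.starProjection T := by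
  refine (ContinuousLinearMap.IsIdempotentElem.commute_iff
    K.isIdempotentElem_starProjection).mpr ⟨?_, ?_⟩
  · rwa [range_starProjection]
  · rw [ker_starProjection]
    exact hT.isSymmetric.orthogonalComplement_mem_invtSubmodule hK

lemma OrthogonalFamily.sum_starProjection_eq_one {ι : Type*} [Fintype ι]
    {V : ι → Submodule 𝕜 E} [∀ i, CompleteSpace (V i)]
    (hV : OrthogonalFamily 𝕜 (fun i => V i) fun i => (V i).subtypeₗᵢ) (htop : iSup V = ⊤) :
    ∑ i, (V i).starProjection = 1 :=
  ContinuousLinearMap.ext fun x => by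
    simpa using hV.sum_projection_of_mem_iSup x (htop ▸ mem_top)

end Projections

section Decomposition

variable {E : Type*} [NormedAddCommGroup E] [InnerProductSpace ℂ E] [FiniteDimensional ℂ E]

theorem exists_finset_isOrtho_invtSubmodule_finrank_le_two {T0 T1 : Module.End ℂ E}
    (hs0 : T0.IsSymmetric) (hs1 : T1.IsSymmetric)
    (h0 : Function.Involutive T0) (h1 : Function.Involutive T1)
    (V : Submodule ℂ E) (hV0 : V ∈ T0.invtSubmodule) (hV1 : V ∈ T1.invtSubmodule) :
    ∃ s : Finset (Submodule ℂ E), (s : Set (Submodule ℂ E)).Pairwise IsOrtho ∧ s.sup id = V ∧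
      ∀ W ∈ s, finrank ℂ W ≤ 2 ∧ W ∈ T0.invtSubmodule ∧ W ∈ T1.invtSubmodule := by
  classical
  induction V using WellFoundedLT.induction with
  | _ V ih =>
    rcases eq_or_ne V ⊥ with rfl | hV
    · exact ⟨∅, by simp, rfl, by simp⟩
    obtain ⟨W, hWV, hW, hWrank, hW0, hW1⟩ :=
      exists_invtSubmodule_le_finrank_le_two h0 h1 hV hV0 hV1
    have hV'V : Wᗮ ⊓ V < V := by
      refine inf_le_right.lt_of_ne fun h => hW (isOrtho_self.mp ?_)
      exact (h.symm ▸ hWV : W ≤ Wᗮ ⊓ V).trans inf_le_left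
    obtain ⟨s, hs, hsup, hmem⟩ := ih _ hV'V
      (Module.End.invtSubmodule.inf_mem (hs0.orthogonalComplement_mem_invtSubmodule hW0) hV0)
      (Module.End.invtSubmodule.inf_mem (hs1.orthogonalComplement_mem_invtSubmodule hW1) hV1)
    have hsW : ∀ U ∈ s, U ⟂ W :=
      fun U hU => (Finset.le_sup (f := id) hU).trans (hsup ▸ inf_le_left)
    refine ⟨insert W s, ?_, ?_, ?_⟩
    · rw [Finset.coe_insert, Set.pairwise_insert]
      exact ⟨hs, fun U hU _ => ⟨(hsW U hU).symm, hsW U hU⟩⟩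
    · rw [Finset.sup_insert, hsup, id]
      exact sup_orthogonal_inf_of_hasOrthogonalProjection hWV
    · exact Finset.forall_mem_insert .. |>.mpr ⟨⟨hWrank, hW0, hW1⟩, hmem⟩

theorem exists_starProjections_commute_finrank_le_two {T0 T1 : E →L[ℂ] E}
    (hT0 : IsSelfAdjoint T0) (hT1 : IsSelfAdjoint T1)
    (h0 : Function.Involutive T0) (h1 : Function.Involutive T1) :
    ∃ (k : ℕ) (p : Fin k → E →L[ℂ] E), (∀ i, IsStarProjection (p i)) ∧
      (∀ i j, i ≠ j → p i * p j = 0) ∧ ∑ i, p i = 1 ∧ (∀ i, finrank ℂ (p i).range ≤ 2) ∧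
      (∀ i, Commute (p i) T0) ∧ (∀ i, Commute (p i) T1) := by
  obtain ⟨s, hs, hsup, hmem⟩ := exists_finset_isOrtho_invtSubmodule_finrank_le_two
    hT0.isSymmetric hT1.isSymmetric h0 h1 ⊤ (Module.End.invtSubmodule.top_mem _)
    (Module.End.invtSubmodule.top_mem _)
  let W : Fin s.card → Submodule ℂ E := fun i => s.equivFin.symm i
  have hW : OrthogonalFamily ℂ (fun i => W i) fun i => (W i).subtypeₗᵢ :=
    OrthogonalFamily.of_pairwise fun i j hij =>
      hs (s.equivFin.symm i).2 (s.equivFin.symm j).2 (by simpa [W] using hij)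
  have htop : iSup W = ⊤ := by
    rw [← hsup, Finset.sup_id_eq_sSup, sSup_eq_iSup']
    exact s.equivFin.symm.iSup_comp (g := fun U : s => (U : Submodule ℂ E))
  have hmemW (i) := hmem _ (s.equivFin.symm i).2
  refine ⟨s.card, fun i => (W i).starProjection, fun i => isStarProjection_starProjection,
    fun i j hij => (hW.isOrtho hij).starProjection_comp_starProjection,
    hW.sum_starProjection_eq_one htop, fun i => ?_,
    fun i => commute_starProjection_of_mem_invtSubmodule hT0 (hmemW i).2.1,
    fun i => commute_starProjection_of_mem_invtSubmodule hT1 (hmemW i).2.2⟩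
  rw [range_starProjection]
  exact (hmemW i).1

end Decomposition

lemma Matrix.rank_toEuclideanCLM_symm {𝕜 n : Type*} [RCLike 𝕜] [Fintype n] [DecidableEq n]
    (T : EuclideanSpace 𝕜 n →L[𝕜] EuclideanSpace 𝕜 n) :
    ((toEuclideanCLM (n := n) (𝕜 := 𝕜)).symm T).rank = finrank 𝕜 T.range := by
  conv_rhs => rw [← (toEuclideanCLM (n := n) (𝕜 := 𝕜)).apply_symm_apply T]
  exact rank_eq_finrank_range_toLin _ (PiLp.basisFun 2 𝕜 n) (PiLp.basisFun 2 𝕜 n)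

lemma Matrix.involutive_toEuclideanCLM {𝕜 n : Type*} [RCLike 𝕜] [Fintype n] [DecidableEq n]
    {A : Matrix n n 𝕜} (hA : A * A = 1) : Function.Involutive (toEuclideanCLM (𝕜 := 𝕜) A) :=
  fun x => by rw [← mul_apply_eq_comp, ← map_mul, hA, map_one, one_apply_eq_self]

/-- **Lemma of Masanes:** two ±1-valued Hermitian observables on `ℂⁿ` can be
simultaneously block-diagonalized into blocks of dimension at most 2: there is a
finite family of pairwise orthogonal projections, of rank at most 2, summing to
the identity, each commuting with both observables. -/
theorem jordan_blocks_of_two_pm_one_observables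
    (n : ℕ) (A0 A1 : Matrix (Fin n) (Fin n) ℂ)
    (h0 : A0.IsHermitian) (h1 : A1.IsHermitian)
    (h0sq : A0 * A0 = 1) (h1sq : A1 * A1 = 1) :
    ∃ (k : ℕ) (P : Fin k → Matrix (Fin n) (Fin n) ℂ),
      (∀ i, (P i).IsHermitian) ∧
      (∀ i, P i * P i = P i) ∧
      (∀ i j, i ≠ j → P i * P j = 0) ∧
      (∑ i, P i) = 1 ∧
      (∀ i, (P i).rank ≤ 2) ∧
      (∀ i, P i * A0 = A0 * P i) ∧
      (∀ i, P i * A1 = A1 * P i) := by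
  let Φ : Matrix (Fin n) (Fin n) ℂ ≃⋆ₐ[ℂ] (EuclideanSpace ℂ (Fin n) →L[ℂ] _) := toEuclideanCLM
  obtain ⟨k, p, hp, hortho, hsum, hrank, hc0, hc1⟩ :=
    exists_starProjections_commute_finrank_le_two (h0.isSelfAdjoint.map Φ)
      (h1.isSelfAdjoint.map Φ) (involutive_toEuclideanCLM h0sq) (involutive_toEuclideanCLM h1sq)
  refine ⟨k, fun i => Φ.symm (p i),
    fun i => isHermitian_iff_isSelfAdjoint.mpr ((hp i).isSelfAdjoint.map Φ.symm),
    fun i => ((hp i).isIdempotentElem.map Φ.symm).eq, fun i j hij => ?_, ?_,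
    fun i => (rank_toEuclideanCLM_symm (p i)).trans_le (hrank i),
    fun i => by simpa [Φ] using ((hc0 i).map Φ.symm).eq,
    fun i => by simpa [Φ] using ((hc1 i).map Φ.symm).eq⟩
  · rw [← map_mul, hortho i j hij, map_zero]
  · rw [← map_sum, hsum, map_one]
end

section
/- Let a = √((3−√5)/2), let θ ∈ ℝ, and define the two-qubit state |φ⟩ = a(|01⟩ + |10⟩) + e^{iθ}√(1−2a²)|11⟩ in ℂ² ⊗ ℂ². Take the measurements A₀ = B₀ given by projections Π_{+|0} = |0⟩⟨0|, Π_{−|0} = |1⟩⟨1|, and A₁ = B₁ given by Π_{+|1} = |+⟩⟨+|, Π_{−|1} = I − |+⟩⟨+| where |+⟩ = (1/√(1−a²))(√(1−2a²)|0⟩ − e^{iθ} a |1⟩). Then the behavior p(a,b|x,y) = ⟨φ|(Π_{a|x} ⊗ Π_{b|y})|φ⟩ satisfies the Hardy constraints p(+,+|0,0) = p(+,−|1,0) = p(−,+|0,1) = 0 and achieves Hardy's probability p(+,+|1,1) = (5√5 − 11)/2. -/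
open Matrix Complex
open scoped Kronecker

noncomputable section

/-- Hardy's amplitude `a = √((3 − √5)/2)`. -/
def aH : ℝ := Real.sqrt ((3 - Real.sqrt 5) / 2)

/-- The phase factor times `√(1 − 2a²)`. -/
def cH (θ : ℝ) : ℂ := Complex.exp (θ * Complex.I) * (Real.sqrt (1 - 2 * aH ^ 2) : ℝ)

/-- Hardy's state `|φ⟩ = a(|01⟩ + |10⟩) + e^{iθ}√(1−2a²)|11⟩` in `ℂ² ⊗ ℂ²`,
given by its coordinates in the computational basis. -/
def phiH (θ : ℝ) : Fin 2 × Fin 2 → ℂ :=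
  fun p => !![0, (aH : ℂ); (aH : ℂ), cH θ] p.1 p.2

/-- The vector `|+⟩ = (1/√(1−a²))(√(1−2a²)|0⟩ − e^{iθ} a |1⟩)`. -/
def plusH (θ : ℝ) : Fin 2 → ℂ :=
  ![(Real.sqrt (1 - 2 * aH ^ 2) : ℂ) / (Real.sqrt (1 - aH ^ 2) : ℂ),
    -(Complex.exp (θ * Complex.I) * (aH : ℂ)) / (Real.sqrt (1 - aH ^ 2) : ℂ)]

/-- The rank-one projection `|+⟩⟨+|`. -/
def projPlusH (θ : ℝ) : Matrix (Fin 2) (Fin 2) ℂ :=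
  vecMulVec (plusH θ) (star (plusH θ))

/-- Hardy's measurements: input `0` is the computational-basis measurement
`Π₊ = |0⟩⟨0|`, `Π₋ = |1⟩⟨1|`; input `1` is `Π₊ = |+⟩⟨+|`, `Π₋ = 1 − |+⟩⟨+|`.
Outcome `true` = `+`, `false` = `−`. -/
def measH (θ : ℝ) : Fin 2 → Bool → Matrix (Fin 2) (Fin 2) ℂ :=
  fun x a =>
    if x = 0 then (if a then !![1, 0; 0, 0] else !![0, 0; 0, 1])
    else (if a then projPlusH θ else 1 - projPlusH θ)

/-! All four events are products of rank-one projections, so each probability is the squared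
modulus of an amplitude `⟨u ⊗ v|φ⟩ = ∑ᵢⱼ ūᵢ v̄ⱼ φᵢⱼ`. The vector `|+⟩` is orthogonal to the second
column `(a, e^{iθ}√(1−2a²))` of the coefficient matrix of `φ`; this gives the two nontrivial
constraints and collapses the Hardy amplitude to `a ⟨+|0⟩⟨+|1⟩`, whose squared modulus
`a⁴(1−2a²)/(1−a²)²` equals `(5√5−11)/2` at `a² = (3−√5)/2`. -/

open ComplexConjugate

theorem Matrix.kronecker_vecMulVec {α ι κ ι' κ' : Type*} [CommSemigroup α]
    (u : ι → α) (v : κ → α) (w : ι' → α) (x : κ' → α) :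
    vecMulVec u v ⊗ₖ vecMulVec w x =
      vecMulVec (fun p => u p.1 * w p.2) (fun q => v q.1 * x q.2) := by
  ext ⟨i, i'⟩ ⟨j, j'⟩
  exact mul_mul_mul_comm _ _ _ _

theorem Matrix.star_dotProduct_vecMulVec_star_mulVec {α ι : Type*} [Fintype ι] [CommSemiring α]
    [StarRing α] (φ w : ι → α) :
    star φ ⬝ᵥ (vecMulVec w (star w) *ᵥ φ) = star (star w ⬝ᵥ φ) * (star w ⬝ᵥ φ) := by
  rw [dotProduct_mulVec, vecMul_vecMulVec, smul_dotProduct, star_dotProduct, smul_eq_mul]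

theorem star_dotProduct_kronecker_vecMulVec_star_mulVec {ι κ : Type*} [Fintype ι] [Fintype κ]
    (φ : ι × κ → ℂ) (u : ι → ℂ) (v : κ → ℂ) :
    star φ ⬝ᵥ ((vecMulVec u (star u) ⊗ₖ vecMulVec v (star v)) *ᵥ φ) =
      normSq (∑ i, ∑ j, star (u i) * star (v j) * φ (i, j)) := by
  have hstar : (fun q : ι × κ => star u q.1 * star v q.2) = star fun p => u p.1 * v p.2 := by
    ext q; simp
  rw [kronecker_vecMulVec, hstar, star_dotProduct_vecMulVec_star_mulVec, normSq_eq_conj_mul_self]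
  simp only [dotProduct, Fintype.sum_prod_type, Pi.star_apply, star_mul']
  rfl

theorem measH_zero_true (θ : ℝ) : measH θ 0 true = vecMulVec ![1, 0] (star ![1, 0]) := by
  rw [measH, if_pos rfl, if_pos rfl]
  ext i j; fin_cases i <;> fin_cases j <;> simp [vecMulVec_apply]

theorem measH_zero_false (θ : ℝ) : measH θ 0 false = vecMulVec ![0, 1] (star ![0, 1]) := by
  rw [measH, if_pos rfl, if_neg Bool.false_ne_true]
  ext i j; fin_cases i <;> fin_cases j <;> simp [vecMulVec_apply]

theorem measH_one_true (θ : ℝ) : measH θ 1 true = vecMulVec (plusH θ) (star (plusH θ)) := rfl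

theorem sum_star_mul_star_mul_phiH (θ : ℝ) (u v : Fin 2 → ℂ) :
    ∑ i, ∑ j, star (u i) * star (v j) * phiH θ (i, j) =
      aH * (star (u 0) * star (v 1) + star (u 1) * star (v 0)) +
        star (u 1) * star (v 1) * cH θ := by
  simp only [phiH, of_apply, cons_val', cons_val_fin_one, Fin.sum_univ_two, cons_val_zero,
    cons_val_one, mul_zero, zero_add]
  ring

theorem star_plusH_one_mul_cH (θ : ℝ) :
    star (plusH θ 1) * cH θ = -(aH * star (plusH θ 0)) := by
  have h : conj (exp (θ * I)) * exp (θ * I) = 1 := by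
    rw [← exp_conj, ← exp_add]; simp
  simp only [plusH, cH, cons_val_one, cons_val_fin_one, cons_val_zero, star_div₀, star_neg,
    star_mul', RCLike.star_def, conj_ofReal]
  linear_combination (-(aH * √(1 - 2 * aH ^ 2) / √(1 - aH ^ 2)) : ℂ) * h

theorem sqrt_five_lt_three : √5 < 3 := by
  rw [Real.sqrt_lt' (by norm_num)]; norm_num

theorem two_lt_sqrt_five : 2 < √5 := by
  rw [Real.lt_sqrt zero_le_two]; norm_num

theorem aH_sq : aH ^ 2 = (3 - √5) / 2 :=
  Real.sq_sqrt (by linarith [sqrt_five_lt_three])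

theorem one_sub_two_mul_aH_sq : 1 - 2 * aH ^ 2 = √5 - 2 := by
  rw [aH_sq]; ring

theorem one_sub_aH_sq : 1 - aH ^ 2 = (√5 - 1) / 2 := by
  rw [aH_sq]; ring

theorem normSq_plusH_zero (θ : ℝ) : normSq (plusH θ 0) = (1 - 2 * aH ^ 2) / (1 - aH ^ 2) := by
  simp only [plusH, Matrix.cons_val_zero, normSq_div, normSq_ofReal]
  rw [Real.mul_self_sqrt (by rw [one_sub_two_mul_aH_sq]; linarith [two_lt_sqrt_five]),
    Real.mul_self_sqrt (by rw [one_sub_aH_sq]; linarith [two_lt_sqrt_five])]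

theorem normSq_plusH_one (θ : ℝ) : normSq (plusH θ 1) = aH ^ 2 / (1 - aH ^ 2) := by
  have hexp : normSq (exp (θ * I)) = 1 := by
    rw [normSq_eq_norm_sq, norm_exp_ofReal_mul_I, one_pow]
  simp only [plusH, Matrix.cons_val_one, Matrix.cons_val_zero, normSq_div, normSq_neg, normSq_mul,
    normSq_ofReal, hexp]
  rw [Real.mul_self_sqrt (by rw [one_sub_aH_sq]; linarith [two_lt_sqrt_five])]
  ring

theorem hardy_value :
    aH ^ 2 * ((1 - 2 * aH ^ 2) / (1 - aH ^ 2)) * (aH ^ 2 / (1 - aH ^ 2)) = (5 * √5 - 11) / 2 := by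
  have h5 : √5 ^ 2 = 5 := Real.sq_sqrt (by norm_num)
  have hne : √5 - 1 ≠ 0 := by linarith [two_lt_sqrt_five]
  rw [one_sub_two_mul_aH_sq, one_sub_aH_sq, aH_sq]
  field_simp
  linear_combination (-(3:ℝ) * √5 + 5) * h5

/-- **Hardy's two-qubit realization:** the state `|φ⟩` with the measurements above
satisfies the three Hardy constraints and attains `p_Hardy = (5√5 − 11)/2`. -/
theorem hardy_two_qubit_realization (θ : ℝ)
    (p : Bool → Bool → Fin 2 → Fin 2 → ℂ)
    (hp : ∀ a b x y,
      p a b x y = star (phiH θ) ⬝ᵥ ((measH θ x a ⊗ₖ measH θ y b) *ᵥ phiH θ)) :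
    p true true 0 0 = 0 ∧
    p true false 1 0 = 0 ∧
    p false true 0 1 = 0 ∧
    p true true 1 1 = ((5 * Real.sqrt 5 - 11) / 2 : ℝ) := by
  have orthogonal : aH * star (plusH θ 0) + star (plusH θ 1) * cH θ = 0 := by
    rw [star_plusH_one_mul_cH]; ring
  have hardy_amplitude : aH * (star (plusH θ 0) * star (plusH θ 1) +
      star (plusH θ 1) * star (plusH θ 0)) + star (plusH θ 1) * star (plusH θ 1) * cH θ =
      aH * star (plusH θ 0) * star (plusH θ 1) := by
    rw [mul_assoc (star (plusH θ 1)), star_plusH_one_mul_cH]; ring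
  simp only [hp, measH_zero_true, measH_zero_false, measH_one_true,
    star_dotProduct_kronecker_vecMulVec_star_mulVec, sum_star_mul_star_mul_phiH]
  refine ⟨?_, ?_, ?_, ?_⟩
  · simp
  · simpa using orthogonal
  · simpa [add_comm] using orthogonal
  · rw [hardy_amplitude, normSq_mul, normSq_mul, normSq_ofReal, star_def, normSq_conj,
      normSq_conj, normSq_plusH_zero, normSq_plusH_one, ← hardy_value]
    push_cast; ring
end
end

section
/- Let p(a,b|x,y), a,b ∈ {+,−}, x,y ∈ {0,1}, be a behavior admitting a local hidden variable model. If p satisfies the Hardy constraints p(+,+|0,0) = 0, p(+,−|1,0) = 0 and p(−,+|0,1) = 0, then Hardy's probability vanishes: p(+,+|1,1) = 0. -/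
open scoped BigOperators

/-- A behavior `p(a,b|x,y)` (outcome `true` = `+`, `false` = `−`; inputs in
`Fin 2`) admits a local hidden variable model: there are finitely many hidden
variables `λ`, weights `q(λ)`, and local response probabilities
`pA(a|x,λ)`, `pB(b|y,λ)` reproducing `p`. -/
def IsLHV (p : Bool → Bool → Fin 2 → Fin 2 → ℝ) : Prop :=
  ∃ (N : ℕ) (q : Fin N → ℝ)
    (pA : Bool → Fin 2 → Fin N → ℝ) (pB : Bool → Fin 2 → Fin N → ℝ),
    (∀ l, 0 ≤ q l) ∧ (∑ l, q l) = 1 ∧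
    (∀ a x l, 0 ≤ pA a x l ∧ pA a x l ≤ 1) ∧
    (∀ x l, pA true x l + pA false x l = 1) ∧
    (∀ b y l, 0 ≤ pB b y l ∧ pB b y l ≤ 1) ∧
    (∀ y l, pB true y l + pB false y l = 1) ∧
    (∀ a b x y, p a b x y = ∑ l, q l * pA a x l * pB b y l)

/-- **Hardy's paradox, local side:** any behavior admitting a local hidden
variable model and satisfying the three Hardy constraints has vanishing
Hardy probability. -/
theorem hardy_probability_vanishes_for_LHV
    (p : Bool → Bool → Fin 2 → Fin 2 → ℝ)
    (hpos : ∀ a b x y, 0 ≤ p a b x y)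
    (hnorm : ∀ x y,
      p true true x y + p true false x y + p false true x y + p false false x y = 1)
    (hlhv : IsLHV p)
    (h1 : p true true 0 0 = 0)
    (h2 : p true false 1 0 = 0)
    (h3 : p false true 0 1 = 0) :
    p true true 1 1 = 0 := by
  obtain ⟨N, q, pA, pB, hq, hqsum, hA, hAsum, hB, hBsum, hrep⟩ := hlhv
  have hterm : ∀ (a b : Bool) (x y : Fin 2), p a b x y = 0 →
      ∀ l, q l * pA a x l * pB b y l = 0 := by
    intro a b x y hz l
    have := (Finset.sum_eq_zero_iff_of_nonneg (fun i _ => by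
      have := (hA a x i).1; have := (hB b y i).1; have := hq i; positivity)).mp
      ((hrep a b x y ▸ hz))
    exact this l (Finset.mem_univ l)
  rw [hrep]
  apply Finset.sum_eq_zero
  intro l _
  have t1 := hterm _ _ _ _ h1 l
  have t2 := hterm _ _ _ _ h2 l
  have t3 := hterm _ _ _ _ h3 l
  rcases mul_eq_zero.mp t3 with h | hB1
  · rcases mul_eq_zero.mp h with hq0 | hAf0
    · simp [hq0]
    · have hAt0 : pA true 0 l = 1 := by have := hAsum 0 l; linarith
      rw [hAt0] at t1
      rcases mul_eq_zero.mp t1 with h' | hBt0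
      · rcases mul_eq_zero.mp h' with hq0 | h1'
        · simp [hq0]
        · linarith
      · have hBf0 : pB false 0 l = 1 := by have := hBsum 0 l; linarith
        rw [hBf0] at t2
        rcases mul_eq_zero.mp (by linarith [t2] : q l * pA true 1 l = 0) with hq0 | hA1
        · simp [hq0]
        · simp [hA1]
  · simp [hB1]
end

section
/- Let ε ≥ 0 and let p(a,b|x,y), a,b ∈ {+,−}, x,y ∈ {0,1}, be a behavior admitting a local hidden variable model. If p satisfies the relaxed Hardy constraints p(+,+|0,0) ≤ ε, p(+,−|1,0) ≤ ε and p(−,+|0,1) ≤ ε, then Hardy's probability satisfies p(+,+|1,1) ≤ 3ε. -/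
open scoped BigOperators

/-- **The local bound for the nonideal Hardy test:** if a behavior admitting a
local hidden variable model satisfies the relaxed Hardy constraints with error
`ε`, then its Hardy probability is at most `3ε`. -/
theorem hardy_relaxed_local_bound
    (ε : ℝ) (hε : 0 ≤ ε)
    (p : Bool → Bool → Fin 2 → Fin 2 → ℝ)
    (hpos : ∀ a b x y, 0 ≤ p a b x y)
    (hnorm : ∀ x y,
      p true true x y + p true false x y + p false true x y + p false false x y = 1)
    (hlhv : IsLHV p)
    (h1 : p true true 0 0 ≤ ε)
    (h2 : p true false 1 0 ≤ ε)
    (h3 : p false true 0 1 ≤ ε) :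
    p true true 1 1 ≤ 3 * ε := by
  obtain ⟨N, q, pA, pB, hq, hqs, hA, hAn, hB, hBn, hrep⟩ := hlhv
  have key : p true true 1 1 ≤ p true true 0 0 + p true false 1 0 + p false true 0 1 := by
    rw [hrep, hrep, hrep, hrep, ← Finset.sum_add_distrib, ← Finset.sum_add_distrib]
    apply Finset.sum_le_sum
    intro l _
    have hAf0 : pA false 0 l = 1 - pA true 0 l := by linarith [hAn 0 l]
    have hBf0 : pB false 0 l = 1 - pB true 0 l := by linarith [hBn 0 l]
    obtain ⟨ha0, ha0'⟩ := hA true 0 l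
    obtain ⟨ha1, ha1'⟩ := hA true 1 l
    obtain ⟨hb0, hb0'⟩ := hB true 0 l
    obtain ⟨hb1, hb1'⟩ := hB true 1 l
    have hql := hq l
    rw [hAf0, hBf0]
    nlinarith [mul_nonneg (mul_nonneg hql (sub_nonneg.2 ha0')) hb1,
      mul_nonneg (mul_nonneg hql ha1) (sub_nonneg.2 hb0'),
      mul_nonneg (mul_nonneg hql ha0) hb0,
      mul_nonneg (mul_nonneg hql (sub_nonneg.2 ha1')) (sub_nonneg.2 hb1'),
      mul_nonneg (mul_nonneg hql (sub_nonneg.2 ha0')) (sub_nonneg.2 hb1'),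
      mul_nonneg (mul_nonneg hql (sub_nonneg.2 ha1')) hb0]
  linarith
end

section
/- Let ρ be a density matrix on ℂ^{d_A} ⊗ ℂ^{d_B}, and for x ∈ {0,1} let Π_{+|x}, Π_{−|x} be orthogonal projections on ℂ^{d_A} with Π_{+|x} + Π_{−|x} = I, and likewise Π_{±|y} on ℂ^{d_B} for y ∈ {0,1}; set p(a,b|x,y) = Tr(ρ(Π_{a|x} ⊗ Π_{b|y})). Then there exist finite families of pairwise orthogonal projections {Π^i} on ℂ^{d_A} and {Π^j} on ℂ^{d_B}, each projection of rank at most 2, with Σ_i Π^i = I and Σ_j Π^j = I, each Π^i commuting with Π_{a|x} for all a, x and each Π^j commuting with Π_{b|y} for all b, y, such that, setting q_{ij} = Tr(ρ(Π^i ⊗ Π^j)) and, whenever q_{ij} > 0, ρ_{ij} = (Π^i ⊗ Π^j) ρ (Π^i ⊗ Π^j)/q_{ij}, one has: q_{ij} ≥ 0, Σ_{i,j} q_{ij} = 1, each ρ_{ij} is a density matrix supported on a subspace of dimension at most 2 × 2, and p(a,b|x,y) = Σ_{i,j : q_{ij} > 0} q_{ij} Tr(ρ_{ij}(Π_{a|x}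 ⊗ Π_{b|y})) for all a, b, x, y. -/
/-!
Jordan's lemma: inside any nonzero subspace `W` invariant under two idempotents `f` and `g` there
is a nonzero invariant subspace of dimension at most two, namely the span of `u` and `g u`, where
`u` is an eigenvector of `f g` on `f(W)` (or of `g` on `W` when `f` kills `W`). For orthogonal
projections the orthogonal complement of an invariant subspace is again invariant, so the space
splits orthogonally into such blocks, and the block projections commute with both projections.
Doing this for the two measurements of each party and cutting `ρ` by the tensor products `T` of
block projections gives the decomposition: `T` commutes with `Π_{a|x} ⊗ Π_{b|y}` and the `T`
form a resolution of the identity, so `Tr(ρ M) = ∑ Tr(T ρ T M)`.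
-/

open Matrix Complex
open scoped Kronecker ComplexOrder

noncomputable section

namespace Module.End

variable {K V : Type*} [Field K] [AddCommGroup V] [Module K V]

theorem exists_mem_invtSubmodule_apply_eq_smul [IsAlgClosed K] [FiniteDimensional K V]
    (T : End K V) {W : Submodule K V} (hW : W ≠ ⊥) (hWT : W ∈ T.invtSubmodule) :
    ∃ v ∈ W, v ≠ 0 ∧ ∃ c : K, T v = c • v := by
  have : Nontrivial W := Submodule.nontrivial_iff_ne_bot.mpr hW
  obtain ⟨c, hc⟩ := exists_eigenvalue (T.restrict hWT)
  obtain ⟨v, hv⟩ := hc.exists_hasEigenvector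
  exact ⟨v, v.2, by simpa using hv.2, c, congrArg Subtype.val hv.apply_eq_smul⟩

theorem span_pair_mem_invtSubmodule {f g : End K V} (hg : IsIdempotentElem g) {u : V} {a b : K}
    (hfu : f u = a • u) (hfgu : f (g u) = b • u) :
    Submodule.span K {u, g u} ∈ f.invtSubmodule ∧ Submodule.span K {u, g u} ∈ g.invtSubmodule := by
  have hu : u ∈ Submodule.span K {u, g u} := Submodule.subset_span (by simp)
  have hgu : g u ∈ Submodule.span K {u, g u} := Submodule.subset_span (by simp)
  simp only [mem_invtSubmodule_iff_map_le, Submodule.map_span_le, Set.forall_mem_insert,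
    Set.mem_singleton_iff, forall_eq]
  refine ⟨⟨?_, ?_⟩, hgu, ?_⟩
  · rw [hfu]; exact Submodule.smul_mem _ _ hu
  · rw [hfgu]; exact Submodule.smul_mem _ _ hu
  · rw [← mul_apply, hg.eq]; exact hgu

theorem exists_invtSubmodule_finrank_le_two [IsAlgClosed K] [FiniteDimensional K V]
    {f g : End K V} (hf : IsIdempotentElem f) (hg : IsIdempotentElem g) {W : Submodule K V}
    (hW : W ≠ ⊥) (hWf : W ∈ f.invtSubmodule) (hWg : W ∈ g.invtSubmodule) :
    ∃ U ≤ W, U ≠ ⊥ ∧ Module.finrank K U ≤ 2 ∧ U ∈ f.invtSubmodule ∧ U ∈ g.invtSubmodule := by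
  classical
  suffices ∃ u ∈ W, u ≠ 0 ∧ ∃ a b : K, f u = a • u ∧ f (g u) = b • u by
    obtain ⟨u, huW, hu0, a, b, hfu, hfgu⟩ := this
    refine ⟨Submodule.span K {u, g u}, ?_, ?_, ?_, span_pair_mem_invtSubmodule hg hfu hfgu⟩
    · exact Submodule.span_le.mpr (Set.insert_subset huW (Set.singleton_subset_iff.mpr (hWg huW)))
    · exact (Submodule.ne_bot_iff _).mpr ⟨u, Submodule.subset_span (by simp), hu0⟩
    · have := finrank_span_finset_le_card (R := K) ({u, g u} : Finset V)
      rw [Finset.coe_pair] at this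
      exact this.trans Finset.card_le_two
  by_cases hfW : ∀ w ∈ W, f w = 0
  · obtain ⟨u, huW, hu0, c, hgu⟩ := exists_mem_invtSubmodule_apply_eq_smul g hW hWg
    exact ⟨u, huW, hu0, 0, 0, by simp [hfW u huW], by simp [hfW _ (hWg huW)]⟩
  · have hfW₀ : W.map f ≠ ⊥ := by
      obtain ⟨w, hw, hfw⟩ := not_forall₂.mp hfW
      exact (Submodule.ne_bot_iff _).mpr ⟨f w, Submodule.mem_map_of_mem hw, hfw⟩
    have hfWinv : W.map f ∈ (f * g).invtSubmodule := by
      rintro _ ⟨w, hw, rfl⟩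
      exact Submodule.mem_map_of_mem (hWg (hWf hw))
    obtain ⟨_, ⟨w, hw, rfl⟩, hu0, c, hfgu⟩ :=
      exists_mem_invtSubmodule_apply_eq_smul (f * g) hfW₀ hfWinv
    refine ⟨f w, hWf hw, hu0, 1, c, ?_, ?_⟩
    · rw [one_smul, ← mul_apply, hf.eq]
    · rw [← mul_apply (f := f), ← hfgu, mul_apply]

end Module.End

namespace Submodule

variable {𝕜 E : Type*} [RCLike 𝕜] [NormedAddCommGroup E] [InnerProductSpace 𝕜 E]

theorem commute_starProjection_of_mem_invtSubmodule_s9 [CompleteSpace E] {V : Submodule 𝕜 E}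
    [V.HasOrthogonalProjection] {T : E →L[𝕜] E} (hT : IsSelfAdjoint T)
    (hV : V ∈ Module.End.invtSubmodule (T : E →ₗ[𝕜] E)) : Commute V.starProjection T :=
  (ContinuousLinearMap.IsIdempotentElem.commute_iff
    isStarProjection_starProjection.isIdempotentElem).mpr
    ⟨by rwa [range_starProjection], by
      rw [ker_starProjection]; exact hT.isSymmetric.orthogonalComplement_mem_invtSubmodule hV⟩

theorem sum_starProjection_eq_one [FiniteDimensional 𝕜 E] {S : Finset (Submodule 𝕜 E)}
    (hS : (S : Set (Submodule 𝕜 E)).Pairwise (· ⟂ ·)) (hStop : S.sup id = ⊤) :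
    ∑ V ∈ S, V.starProjection = 1 := by
  ext x
  rw [_root_.sum_apply, ← Finset.sum_coe_sort]
  refine (OrthogonalFamily.of_pairwise (V := fun V : S => (V : Submodule 𝕜 E))
    (hS.subtype _ _)).sum_projection_of_mem_iSup x ?_
  rw [iSup_subtype, ← Finset.sup_eq_iSup]
  exact hStop ▸ mem_top

end Submodule

section Jordan

variable {E : Type*} [NormedAddCommGroup E] [InnerProductSpace ℂ E] [FiniteDimensional ℂ E]

theorem exists_orthogonal_blocks_finrank_le_two {f g : Module.End ℂ E}
    (hf : f.IsSymmetricProjection) (hg : g.IsSymmetricProjection) (W : Submodule ℂ E)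
    (hWf : W ∈ f.invtSubmodule) (hWg : W ∈ g.invtSubmodule) :
    ∃ S : Finset (Submodule ℂ E),
      (∀ V ∈ S, Module.finrank ℂ V ≤ 2 ∧ V ∈ f.invtSubmodule ∧ V ∈ g.invtSubmodule) ∧
      (S : Set (Submodule ℂ E)).Pairwise (· ⟂ ·) ∧ S.sup id = W := by
  classical
  induction hn : Module.finrank ℂ W using Nat.strong_induction_on generalizing W with
  | _ n ih =>
  rcases eq_or_ne W ⊥ with rfl | hW
  · exact ⟨∅, by simp, by simp, rfl⟩
  obtain ⟨U, hUW, hU, hU2, hUf, hUg⟩ :=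
    Module.End.exists_invtSubmodule_finrank_le_two hf.isIdempotentElem hg.isIdempotentElem
      hW hWf hWg
  have hlt : Module.finrank ℂ (Uᗮ ⊓ W : Submodule ℂ E) < n := by
    have := Submodule.finrank_add_inf_finrank_orthogonal hUW
    have := Submodule.one_le_finrank_iff.mpr hU
    omega
  obtain ⟨S, hS, hSorth, hSsup⟩ := ih _ hlt (Uᗮ ⊓ W)
    (Module.End.invtSubmodule.inf_mem
      (hf.isSymmetric.orthogonalComplement_mem_invtSubmodule hUf) hWf)
    (Module.End.invtSubmodule.inf_mem
      (hg.isSymmetric.orthogonalComplement_mem_invtSubmodule hUg) hWg) rfl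
  refine ⟨insert U S, Finset.forall_mem_insert _ _ _ |>.mpr ⟨⟨hU2, hUf, hUg⟩, hS⟩, ?_, ?_⟩
  · rw [Finset.coe_insert]
    refine hSorth.insert_of_symm fun V hV _ => (Submodule.isOrtho_iff_le.mpr ?_).symm
    exact (Finset.le_sup (f := id) hV).trans (hSsup.le.trans inf_le_left)
  · rw [Finset.sup_insert, hSsup]
    exact Submodule.sup_orthogonal_inf_of_hasOrthogonalProjection hUW

end Jordan

namespace Matrix

variable {n : Type*} [Fintype n] [DecidableEq n]

theorem rank_eq_finrank_range_toEuclideanCLM {𝕜 : Type*} [RCLike 𝕜] (A : Matrix n n 𝕜) :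
    A.rank = Module.finrank 𝕜 (toEuclideanCLM (𝕜 := 𝕜) A :
      EuclideanSpace 𝕜 n →ₗ[𝕜] EuclideanSpace 𝕜 n).range := by
  rw [coe_toEuclideanCLM_eq_toEuclideanLin, toEuclideanLin_eq_toLin_orthonormal,
    rank_eq_finrank_range_toLin A (EuclideanSpace.basisFun n 𝕜).toBasis
      (EuclideanSpace.basisFun n 𝕜).toBasis]

theorem exists_orthogonal_starProjections_rank_le_two_commute {P Q : Matrix n n ℂ}
    (hP : IsStarProjection P) (hQ : IsStarProjection Q) :
    ∃ (k : ℕ) (F : Fin k → Matrix n n ℂ), (∀ i, IsStarProjection (F i)) ∧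
      Pairwise (fun i j => F i * F j = 0) ∧ ∑ i, F i = 1 ∧ (∀ i, (F i).rank ≤ 2) ∧
      (∀ i, Commute (F i) P) ∧ (∀ i, Commute (F i) Q) := by
  set φ := toEuclideanCLM (𝕜 := ℂ) (n := n)
  have hφP := hP.map φ
  have hφQ := hQ.map φ
  obtain ⟨S, hS, hSorth, hStop⟩ := exists_orthogonal_blocks_finrank_le_two
    (ContinuousLinearMap.IsStarProjection.isSymmetricProjection hφP)
    (ContinuousLinearMap.IsStarProjection.isSymmetricProjection hφQ) ⊤
    (Module.End.invtSubmodule.top_mem _) (Module.End.invtSubmodule.top_mem _)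
  let V : Fin S.card → Submodule ℂ (EuclideanSpace ℂ n) := fun i => S.equivFin.symm i
  have hV : ∀ i, V i ∈ S := fun i => (S.equivFin.symm i).2
  refine ⟨S.card, fun i => φ.symm (V i).starProjection,
    fun i => isStarProjection_starProjection.map φ.symm.toStarAlgHom, fun i j hij => ?_, ?_,
    fun i => ?_, fun i => ?_, fun i => ?_⟩
  · have hVij : V i ⟂ V j := hSorth (hV i) (hV j)
      (fun h => hij (S.equivFin.symm.injective (Subtype.ext h)))
    dsimp only
    rw [← map_mul, ContinuousLinearMap.mul_def, hVij.starProjection_comp_starProjection, map_zero]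
  · rw [← map_sum, Equiv.sum_comp S.equivFin.symm (fun V => V.1.starProjection),
      Finset.sum_coe_sort S (fun V => V.starProjection),
      Submodule.sum_starProjection_eq_one hSorth hStop, map_one]
  · rw [rank_eq_finrank_range_toEuclideanCLM, φ.apply_symm_apply, Submodule.range_starProjection]
    exact (hS _ (hV i)).1
  · simpa using ((V i).commute_starProjection_of_mem_invtSubmodule_s9 hφP.isSelfAdjoint
      (hS _ (hV i)).2.1).map φ.symm
  · simpa using ((V i).commute_starProjection_of_mem_invtSubmodule_s9 hφQ.isSelfAdjoint
      (hS _ (hV i)).2.2).map φ.symm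

theorem exists_orthogonal_starProjections_rank_le_two_commute_measurement
    {P : Fin 2 → Bool → Matrix n n ℂ} (hP : ∀ x, IsStarProjection (P x true))
    (hsum : ∀ x, P x true + P x false = 1) :
    ∃ (k : ℕ) (F : Fin k → Matrix n n ℂ), (∀ i, IsStarProjection (F i)) ∧
      Pairwise (fun i j => F i * F j = 0) ∧ ∑ i, F i = 1 ∧ (∀ i, (F i).rank ≤ 2) ∧
      ∀ i x a, Commute (F i) (P x a) := by
  obtain ⟨k, F, hF, hForth, hFsum, hFrank, hF₀, hF₁⟩ :=
    exists_orthogonal_starProjections_rank_le_two_commute (hP 0) (hP 1)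
  refine ⟨k, F, hF, hForth, hFsum, hFrank, fun i x a => ?_⟩
  have htrue : Commute (F i) (P x true) := by fin_cases x; exacts [hF₀ i, hF₁ i]
  cases a
  · rw [eq_sub_of_add_eq' (hsum x)]
    exact (Commute.one_right _).sub_right htrue
  · exact htrue

end Matrix

section Kronecker

variable {R m n : Type*} [CommSemiring R]

theorem Matrix.sum_kronecker_sum {ι κ : Type*} [Fintype ι] [Fintype κ]
    (A : ι → Matrix m m R) (B : κ → Matrix n n R) :
    (∑ i, A i) ⊗ₖ (∑ j, B j) = ∑ ij : ι × κ, A ij.1 ⊗ₖ B ij.2 := by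
  ext
  simp [sum_apply, Finset.sum_mul_sum, Fintype.sum_prod_type]

theorem Commute.kronecker [Fintype m] [Fintype n] {A C : Matrix m m R} {B D : Matrix n n R}
    (hAC : Commute A C) (hBD : Commute B D) : Commute (A ⊗ₖ B) (C ⊗ₖ D) := by
  rw [Commute, SemiconjBy, ← mul_kronecker_mul, ← mul_kronecker_mul, hAC.eq, hBD.eq]

theorem IsStarProjection.kronecker [Fintype m] [Fintype n] [StarRing R] {A : Matrix m m R}
    {B : Matrix n n R} (hA : IsStarProjection A) (hB : IsStarProjection B) :
    IsStarProjection (A ⊗ₖ B) where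
  isIdempotentElem := by
    rw [IsIdempotentElem, ← mul_kronecker_mul, hA.isIdempotentElem.eq, hB.isIdempotentElem.eq]
  isSelfAdjoint := by
    rw [IsSelfAdjoint, star_eq_conjTranspose, conjTranspose_kronecker]
    exact congrArg₂ (· ⊗ₖ ·) hA.isSelfAdjoint hB.isSelfAdjoint

end Kronecker

namespace Matrix

variable {n : Type*} [Fintype n]

theorem trace_mul_mul_eq_trace_conj_mul {R : Type*} [CommSemiring R] {ρ T M : Matrix n n R}
    (hT : IsIdempotentElem T) (hTM : Commute T M) :
    (ρ * T * M).trace = (T * ρ * T * M).trace := by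
  calc (ρ * T * M).trace = (ρ * T * (M * T)).trace := by
        rw [← hTM.eq, ← Matrix.mul_assoc, Matrix.mul_assoc ρ T T, hT.eq]
    _ = (T * ρ * T * M).trace := by
        rw [← Matrix.mul_assoc, trace_mul_comm]; simp only [Matrix.mul_assoc]

theorem trace_mul_eq_sum_trace_conj_mul [DecidableEq n] {R ι : Type*} [CommSemiring R]
    [Fintype ι] {T : ι → Matrix n n R} (hT : ∀ i, IsIdempotentElem (T i)) (hsum : ∑ i, T i = 1)
    (ρ : Matrix n n R) {M : Matrix n n R} (hM : ∀ i, Commute (T i) M) :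
    (ρ * M).trace = ∑ i, (T i * ρ * T i * M).trace := by
  calc (ρ * M).trace = (ρ * (∑ i, T i) * M).trace := by rw [hsum, Matrix.mul_one]
    _ = ∑ i, (ρ * T i * M).trace := by simp only [Matrix.mul_sum, Matrix.sum_mul, trace_sum]
    _ = ∑ i, (T i * ρ * T i * M).trace :=
        Finset.sum_congr rfl fun i _ => trace_mul_mul_eq_trace_conj_mul (hT i) (hM i)

def outcomeProb (ρ T : Matrix n n ℂ) : ℝ := (ρ * T).trace.re

/-- The Lüders post-measurement state `T ρ T / Tr(ρ T)`; it is `0` when the outcome has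
probability `0`. -/
def postMeasurementState (ρ T : Matrix n n ℂ) : Matrix n n ℂ :=
  ((outcomeProb ρ T : ℂ)⁻¹) • (T * ρ * T)

variable {ρ T : Matrix n n ℂ}

theorem PosSemidef.conj_of_isSelfAdjoint (hρ : ρ.PosSemidef) (hT : IsSelfAdjoint T) :
    (T * ρ * T).PosSemidef := by
  simpa [show Tᴴ = T from hT] using hρ.conjTranspose_mul_mul_same T

theorem trace_conj_of_isIdempotentElem (ρ : Matrix n n ℂ) (hT : IsIdempotentElem T) :
    (T * ρ * T).trace = (ρ * T).trace := by
  rw [trace_mul_comm, ← Matrix.mul_assoc, hT.eq, trace_mul_comm]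

theorem PosSemidef.trace_mul_starProjection_nonneg (hρ : ρ.PosSemidef)
    (hT : IsStarProjection T) : 0 ≤ (ρ * T).trace := by
  rw [← trace_conj_of_isIdempotentElem ρ hT.isIdempotentElem]
  exact (hρ.conj_of_isSelfAdjoint hT.isSelfAdjoint).trace_nonneg

theorem PosSemidef.outcomeProb_nonneg (hρ : ρ.PosSemidef) (hT : IsStarProjection T) :
    0 ≤ outcomeProb ρ T :=
  (Complex.nonneg_iff.mp (hρ.trace_mul_starProjection_nonneg hT)).1

theorem PosSemidef.ofReal_outcomeProb (hρ : ρ.PosSemidef) (hT : IsStarProjection T) :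
    (outcomeProb ρ T : ℂ) = (ρ * T).trace :=
  (Complex.eq_re_of_ofReal_le (by
    rw [Complex.ofReal_zero]; exact hρ.trace_mul_starProjection_nonneg hT)).symm

theorem sum_outcomeProb_eq_one [DecidableEq n] {ι : Type*} [Fintype ι] (hρ : ρ.PosSemidef)
    (hρtr : ρ.trace = 1) {T : ι → Matrix n n ℂ} (hT : ∀ i, IsStarProjection (T i))
    (hsum : ∑ i, T i = 1) :
    ∑ i, outcomeProb ρ (T i) = 1 := by
  have : ∑ i, (outcomeProb ρ (T i) : ℂ) = 1 := by
    simp only [hρ.ofReal_outcomeProb (hT _), ← trace_sum, ← Matrix.mul_sum, hsum,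
      Matrix.mul_one, hρtr]
  exact_mod_cast this

theorem PosSemidef.postMeasurementState_posSemidef (hρ : ρ.PosSemidef)
    (hT : IsStarProjection T) : (postMeasurementState ρ T).PosSemidef :=
  (hρ.conj_of_isSelfAdjoint hT.isSelfAdjoint).smul (by
    have := hρ.outcomeProb_nonneg hT
    positivity)

theorem PosSemidef.trace_postMeasurementState (hρ : ρ.PosSemidef) (hT : IsStarProjection T)
    (hpos : 0 < outcomeProb ρ T) : (postMeasurementState ρ T).trace = 1 := by
  rw [postMeasurementState, trace_smul, trace_conj_of_isIdempotentElem ρ hT.isIdempotentElem,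
    ← hρ.ofReal_outcomeProb hT, smul_eq_mul, inv_mul_cancel₀ (by exact_mod_cast hpos.ne')]

theorem conj_postMeasurementState (hT : IsIdempotentElem T) :
    T * postMeasurementState ρ T * T = postMeasurementState ρ T := by
  rw [postMeasurementState, Matrix.mul_smul, Matrix.smul_mul, ← Matrix.mul_assoc,
    ← Matrix.mul_assoc, hT.eq, Matrix.mul_assoc, Matrix.mul_assoc, hT.eq, ← Matrix.mul_assoc]

theorem PosSemidef.ite_outcomeProb_mul_trace_postMeasurementState (hρ : ρ.PosSemidef)
    (hT : IsStarProjection T) (M : Matrix n n ℂ) :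
    (if 0 < outcomeProb ρ T then
      (outcomeProb ρ T : ℂ) * (postMeasurementState ρ T * M).trace else 0) =
      (T * ρ * T * M).trace := by
  split_ifs with hpos
  · rw [postMeasurementState, Matrix.smul_mul, trace_smul, smul_eq_mul, ← mul_assoc,
      mul_inv_cancel₀ (by exact_mod_cast hpos.ne'), one_mul]
  · have hzero : (T * ρ * T).trace = 0 := by
      rw [trace_conj_of_isIdempotentElem ρ hT.isIdempotentElem, ← hρ.ofReal_outcomeProb hT,
        le_antisymm (not_lt.mp hpos) (hρ.outcomeProb_nonneg hT), Complex.ofReal_zero]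
    rw [((hρ.conj_of_isSelfAdjoint hT.isSelfAdjoint).trace_eq_zero_iff.mp hzero),
      Matrix.zero_mul, trace_zero]

end Matrix

/-- **Block decomposition of bipartite two-input/two-output quantum behaviors:**
every behavior arising from a density matrix `ρ` on `ℂ^{dA} ⊗ ℂ^{dB}` and
two-outcome projective measurements decomposes as a convex combination of
behaviors of (at most) two-qubit states, obtained by cutting `ρ` along families
of pairwise orthogonal rank-`≤ 2` projections that commute with all the
measurement operators. Outcome `true` = `+`, `false` = `−`; inputs in `Fin 2`. -/
theorem quantum_behavior_two_qubit_block_decomposition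
    (dA dB : ℕ)
    (ρ : Matrix (Fin dA × Fin dB) (Fin dA × Fin dB) ℂ)
    (hρ : ρ.PosSemidef) (hρtr : ρ.trace = 1)
    (PA : Fin 2 → Bool → Matrix (Fin dA) (Fin dA) ℂ)
    (PB : Fin 2 → Bool → Matrix (Fin dB) (Fin dB) ℂ)
    (hAherm : ∀ x a, (PA x a).IsHermitian)
    (hAproj : ∀ x a, PA x a * PA x a = PA x a)
    (hAsum : ∀ x, PA x true + PA x false = 1)
    (hBherm : ∀ y b, (PB y b).IsHermitian)
    (hBproj : ∀ y b, PB y b * PB y b = PB y b)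
    (hBsum : ∀ y, PB y true + PB y false = 1) :
    ∃ (kA kB : ℕ)
      (QA : Fin kA → Matrix (Fin dA) (Fin dA) ℂ)
      (QB : Fin kB → Matrix (Fin dB) (Fin dB) ℂ)
      (q : Fin kA → Fin kB → ℝ)
      (ρblock : Fin kA → Fin kB → Matrix (Fin dA × Fin dB) (Fin dA × Fin dB) ℂ),
      (∀ i, (QA i).IsHermitian) ∧ (∀ i, QA i * QA i = QA i) ∧
      (∀ i i', i ≠ i' → QA i * QA i' = 0) ∧ (∑ i, QA i) = 1 ∧
      (∀ i, (QA i).rank ≤ 2) ∧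
      (∀ j, (QB j).IsHermitian) ∧ (∀ j, QB j * QB j = QB j) ∧
      (∀ j j', j ≠ j' → QB j * QB j' = 0) ∧ (∑ j, QB j) = 1 ∧
      (∀ j, (QB j).rank ≤ 2) ∧
      (∀ i x a, QA i * PA x a = PA x a * QA i) ∧
      (∀ j y b, QB j * PB y b = PB y b * QB j) ∧
      (∀ i j, (ρ * (QA i ⊗ₖ QB j)).trace = (q i j : ℂ)) ∧
      (∀ i j, 0 ≤ q i j) ∧
      (∑ i, ∑ j, q i j) = 1 ∧
      (∀ i j, 0 < q i j →
        ρblock i j =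
          ((q i j : ℂ)⁻¹) • ((QA i ⊗ₖ QB j) * ρ * (QA i ⊗ₖ QB j)) ∧
        (ρblock i j).PosSemidef ∧
        (ρblock i j).trace = 1 ∧
        (QA i ⊗ₖ QB j) * ρblock i j * (QA i ⊗ₖ QB j) = ρblock i j) ∧
      (∀ (a b : Bool) (x y : Fin 2),
        (ρ * (PA x a ⊗ₖ PB y b)).trace =
          ∑ i, ∑ j,
            if 0 < q i j then
              (q i j : ℂ) * (ρblock i j * (PA x a ⊗ₖ PB y b)).trace
            else 0) := by
  obtain ⟨kA, QA, hQA, hQAorth, hQAsum, hQArank, hQAPA⟩ :=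
    exists_orthogonal_starProjections_rank_le_two_commute_measurement
      (fun x => ⟨hAproj x true, hAherm x true⟩) hAsum
  obtain ⟨kB, QB, hQB, hQBorth, hQBsum, hQBrank, hQBPB⟩ :=
    exists_orthogonal_starProjections_rank_le_two_commute_measurement
      (fun y => ⟨hBproj y true, hBherm y true⟩) hBsum
  set T : Fin kA × Fin kB → _ := fun ij => QA ij.1 ⊗ₖ QB ij.2
  have hT : ∀ ij, IsStarProjection (T ij) := fun ij => (hQA ij.1).kronecker (hQB ij.2)
  have hTsum : ∑ ij, T ij = 1 := by rw [← sum_kronecker_sum, hQAsum, hQBsum, one_kronecker_one]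
  refine ⟨kA, kB, QA, QB, fun i j => outcomeProb ρ (T (i, j)),
    fun i j => postMeasurementState ρ (T (i, j)), fun i => (hQA i).isSelfAdjoint,
    fun i => (hQA i).isIdempotentElem, fun i i' h => hQAorth h, hQAsum, hQArank,
    fun j => (hQB j).isSelfAdjoint, fun j => (hQB j).isIdempotentElem, fun j j' h => hQBorth h,
    hQBsum, hQBrank, fun i x a => (hQAPA i x a).eq, fun j y b => (hQBPB j y b).eq,
    fun i j => (hρ.ofReal_outcomeProb (hT (i, j))).symm,
    fun i j => hρ.outcomeProb_nonneg (hT (i, j)), ?_, fun i j hpos => ⟨rfl,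
      hρ.postMeasurementState_posSemidef (hT (i, j)),
      hρ.trace_postMeasurementState (hT (i, j)) hpos,
      conj_postMeasurementState (hT (i, j)).isIdempotentElem⟩, fun a b x y => ?_⟩
  · rw [← Fintype.sum_prod_type' (f := fun i j => outcomeProb ρ (T (i, j)))]
    exact sum_outcomeProb_eq_one hρ hρtr hT hTsum
  · rw [trace_mul_eq_sum_trace_conj_mul (fun ij => (hT ij).isIdempotentElem) hTsum ρ
      (fun ij => (hQAPA ij.1 x a).kronecker (hQBPB ij.2 y b)), Fintype.sum_prod_type]
    simp only [hρ.ite_outcomeProb_mul_trace_postMeasurementState (hT _)]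
end
end

section
/- Let p(a,b|x,y), a,b ∈ {+,−}, x,y ∈ {0,1}, be a no-signaling behavior, and write p_A(a|x) for its Alice marginal and p_B(b|y) for its Bob marginal. Then p(+,+|1,1) − p(+,+|0,0) − p(+,−|1,0) − p(−,+|0,1) = p(+,+|1,1) + p(+,+|1,0) + p(+,+|0,1) − p(+,+|0,0) − p_A(+|1) − p_B(+|1). In particular, the Hardy inequality p(+,+|1,1) ≤ p(+,+|0,0) + p(+,−|1,0) + p(−,+|0,1) is equivalent, for no-signaling behaviors, to the Clauser–Horne inequality p(+,+|1,1) + p(+,+|1,0) + p(+,+|0,1) − p(+,+|0,0) − p_A(+|1) − p_B(+|1) ≤ 0. -/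
/-- **Hardy vs Clauser–Horne for no-signaling behaviors:** for any no-signaling
behavior (outcome `true` = `+`, `false` = `−`; inputs in `Fin 2`), with Alice's
marginal `pa a x = Σ_b p(a,b|x,y)` and Bob's marginal `pb b y = Σ_a p(a,b|x,y)`,
the Hardy expression equals the Clauser–Horne expression; in particular the
Hardy inequality is equivalent to the Clauser–Horne inequality. -/
theorem hardy_iff_clauser_horne_no_signaling
    (p : Bool → Bool → Fin 2 → Fin 2 → ℝ)
    (hpos : ∀ a b x y, 0 ≤ p a b x y)
    (hnorm : ∀ x y,
      p true true x y + p true false x y + p false true x y + p false false x y = 1)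
    (pa : Bool → Fin 2 → ℝ) (pb : Bool → Fin 2 → ℝ)
    (hnsA : ∀ a x y, p a true x y + p a false x y = pa a x)
    (hnsB : ∀ b x y, p true b x y + p false b x y = pb b y) :
    (p true true 1 1 - p true true 0 0 - p true false 1 0 - p false true 0 1 =
      p true true 1 1 + p true true 1 0 + p true true 0 1 - p true true 0 0 -
        pa true 1 - pb true 1) ∧
    ((p true true 1 1 ≤ p true true 0 0 + p true false 1 0 + p false true 0 1) ↔
      (p true true 1 1 + p true true 1 0 + p true true 0 1 - p true true 0 0 -
        pa true 1 - pb true 1 ≤ 0)) := by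
  have h1 := hnsA true 1 0
  have h2 := hnsB true 0 1
  constructor
  · linarith
  · constructor <;> intro h <;> linarith
end
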